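/- For every integer n ≥ 1 and all z: (d/dz) P_n(z; α, β) = n · P_{n−1}(z; α+1, β). -/

import Mathlib

open Finset

/-- Pochhammer symbol `(a)_k = a (a+1) ⋯ (a+k-1)`. -/
noncomputable def poch (a : ℝ) (k : ℕ) : ℝ := ∏ i ∈ Finset.range k, (a + (i : ℝ))

/-- The Hendriksen–van Rossum polynomial `P_n(z; α, β)`. -/
noncomputable def HR (α β : ℝ) (n : ℕ) (z : ℝ) : ℝ :=
  (poch β n / poch (α + 1) n) *
    ∑ k ∈ Finset.range (n + 1),
      poch (-(n : ℝ)) k * poch (α + 1) k /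
          (poch (1 - β - (n : ℝ)) k * (Nat.factorial k : ℝ)) * z ^ k

/-- `d_m(α,β) = −(m+β)/(m+α+1)`. -/
noncomputable def dco (α β m : ℝ) : ℝ := -(m + β) / (m + α + 1)

/-- `b_m(α,β) = −m(m+α+β)/((m+α)(m+α+1))`. -/
noncomputable def bco (α β m : ℝ) : ℝ := -(m * (m + α + β)) / ((m + α) * (m + α + 1))

/-!
Differentiate termwise. After the index shift `k ↦ k + 1`, the recursion
`(a)_{k+1} = a (a+1)_k` applied to `(-n)_{k+1}`, `(α+1)_{k+1}`, `(1-β-n)_{k+1}` and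
`(α+1)_n` cancels the factors `α + 1` and `β + n - 1` and leaves `n` times the
`k`-th coefficient of `P_{n-1}(z; α+1, β)`.
-/

lemma poch_succ (a : ℝ) (k : ℕ) : poch a (k + 1) = a * poch (a + 1) k := by
  rw [poch, poch, prod_range_succ', Nat.cast_zero, add_zero, mul_comm]
  congr 1
  refine prod_congr rfl fun i _ => ?_
  push_cast
  ring

lemma hasDerivAt_sum_range_mul_pow {𝕜 : Type*} [NontriviallyNormedField 𝕜]
    (c : ℕ → 𝕜) (n : ℕ) (z : 𝕜) :
    HasDerivAt (fun z => ∑ k ∈ range (n + 1), c k * z ^ k)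
      (∑ k ∈ range n, ((k : 𝕜) + 1) * c (k + 1) * z ^ k) z := by
  refine (HasDerivAt.fun_sum fun k (_ : k ∈ range (n + 1)) =>
    (hasDerivAt_pow k z).const_mul (c k)).congr_deriv ?_
  rw [sum_range_succ']
  simp only [Nat.cast_zero, zero_mul, mul_zero, add_zero, Nat.add_sub_cancel, Nat.cast_succ]
  exact sum_congr rfl fun k _ => by ring

noncomputable def hrCoeff (α β : ℝ) (n k : ℕ) : ℝ :=
  poch (-(n : ℝ)) k * poch (α + 1) k / (poch (1 - β - (n : ℝ)) k * (Nat.factorial k : ℝ))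

lemma hrPrefactor_mul_succ_mul_hrCoeff_succ {α β : ℝ} {m : ℕ}
    (hα : α + 1 ≠ 0) (hβ : β + m ≠ 0) (k : ℕ) :
    poch β (m + 1) / poch (α + 1) (m + 1) * (((k : ℝ) + 1) * hrCoeff α β (m + 1) (k + 1)) =
      ((m : ℝ) + 1) * (poch β m / poch (α + 1 + 1) m * hrCoeff (α + 1) β m k) := by
  have hn : -((m + 1 : ℕ) : ℝ) + 1 = -(m : ℝ) := by push_cast; ring
  have hb : 1 - β - ((m + 1 : ℕ) : ℝ) + 1 = 1 - β - (m : ℝ) := by push_cast; ring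
  have hb' : 1 - β - ((m : ℝ) + 1) ≠ 0 := fun h => hβ (by linarith)
  have hk : (k : ℝ) + 1 ≠ 0 := by positivity
  rw [hrCoeff, hrCoeff, poch_succ (α + 1), poch_succ (α + 1) k, poch_succ (-_), hn,
    poch_succ (1 - β - _), hb, Nat.factorial_succ, poch, prod_range_succ, ← poch]
  push_cast
  field_simp
  ring

theorem stmt4_general (α β : ℝ)
    (hα : ∀ m : ℤ, α ≠ (m : ℝ)) (hβ : ∀ m : ℤ, β ≠ (m : ℝ))
    (n : ℕ) (hn : 1 ≤ n) (z : ℝ) :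
    deriv (HR α β n) z = (n : ℝ) * HR (α + 1) β (n - 1) z := by
  obtain ⟨m, rfl⟩ : ∃ m, n = m + 1 := ⟨n - 1, (Nat.succ_pred_eq_of_pos hn).symm⟩
  have hα1 : α + 1 ≠ 0 := fun h => hα (-1) (by push_cast; linarith)
  have hβm : β + m ≠ 0 := fun h => hβ (-m) (by push_cast; linarith)
  have hd : HasDerivAt (HR α β (m + 1)) (poch β (m + 1) / poch (α + 1) (m + 1) *
      ∑ k ∈ range (m + 1), ((k : ℝ) + 1) * hrCoeff α β (m + 1) (k + 1) * z ^ k) z :=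
    (hasDerivAt_sum_range_mul_pow _ _ z).const_mul _
  rw [hd.deriv, Nat.add_sub_cancel, HR, mul_sum, mul_sum, mul_sum, Nat.cast_succ]
  refine sum_congr rfl fun k _ => ?_
  have key := hrPrefactor_mul_succ_mul_hrCoeff_succ hα1 hβm k
  unfold hrCoeff at key ⊢
  linear_combination z ^ k * key

/-- `(d/dz) P_n(z; α, β) = n · P_{n−1}(z; α+1, β)` for `n ≥ 1`. -/
theorem stmt4 (α β : ℝ)
    (hα : ∀ m : ℤ, α ≠ (m : ℝ)) (hβ : ∀ m : ℤ, β ≠ (m : ℝ))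
    (hαβ : ∀ m : ℤ, α + β ≠ (m : ℝ))
    (n : ℕ) (hn : 1 ≤ n) (z : ℝ) :
    deriv (HR α β n) z = (n : ℝ) * HR (α + 1) β (n - 1) z :=
  stmt4_general α β hα hβ n hn z
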